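/- Let G be a group acting on a set S, let W and H be subgroups of G with G generated by W ∪ H, and suppose W is normal in G. Let A ⊆ S be a subset such that (i) h·A = A for every h ∈ H, and (ii) for w ∈ W, if w·A ∩ A ≠ ∅ then w = 1. Then every element g ∈ G has a unique expression g = w·h with w ∈ W and h ∈ H; in particular W ∩ H = {1} and G is the internal semidirect product W ⋊ H. -/
import Mathlib


open Pointwise in
theorem stmt10 {G S : Type*} [Group G] [MulAction G S]
    (W H : Subgroup G) [W.Normal]
    (hgen : Subgroup.closure ((W : Set G) ∪ (H : Set G)) = ⊤)
    (A : Set S) (hne : A.Nonempty)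
    (hH : ∀ h ∈ H, h • A = A)
    (hW : ∀ w ∈ W, ((w • A) ∩ A).Nonempty → w = 1) :
    (∀ g : G, ∃! p : W × H, (p.1 : G) * (p.2 : G) = g) ∧ W ⊓ H = ⊥ := by
  have hinf : W ⊓ H = ⊥ := by
    ext x
    simp only [Subgroup.mem_inf, Subgroup.mem_bot]
    constructor
    · rintro ⟨hxW, hxH⟩
      apply hW x hxW
      rw [hH x hxH, Set.inter_self]
      exact hne
    · rintro rfl
      exact ⟨W.one_mem, H.one_mem⟩
  refine ⟨fun g => ?_, hinf⟩
  have hsup : W ⊔ H = ⊤ := by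
    rw [← Subgroup.closure_eq W, ← Subgroup.closure_eq H, ← Subgroup.closure_union]
    exact hgen
  have hg : g ∈ ((W : Set G) * (H : Set G)) := by
    rw [← Subgroup.normal_mul, hsup]
    simp
  obtain ⟨w, hw, h, hh, hwh⟩ := hg
  have hwh' : w * h = g := hwh
  refine ⟨⟨⟨w, hw⟩, ⟨h, hh⟩⟩, hwh', ?_⟩
  rintro ⟨⟨w', hw'⟩, ⟨h', hh'⟩⟩ heq
  simp only at heq
  have hmul : w' * h' = w * h := by rw [heq, hwh']
  have hkey : w⁻¹ * w' = h * h'⁻¹ := by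
    have h1 : w' = w * h * h'⁻¹ := by
      rw [eq_mul_inv_iff_mul_eq]; exact hmul
    rw [h1]; group
  have key : w⁻¹ * w' ∈ W ⊓ H := by
    refine ⟨W.mul_mem (W.inv_mem hw) hw', ?_⟩
    rw [hkey]
    exact H.mul_mem hh (H.inv_mem hh')
  rw [hinf, Subgroup.mem_bot] at key
  have hww : w' = w := by
    have h1 : w * (w⁻¹ * w') = w * 1 := by rw [key]
    simpa [mul_assoc] using h1
  have hhh : h' = h := by
    rw [hww] at hmul
    exact mul_left_cancel hmul
  ext <;> simp [hww, hhh]
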